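/- Let C be a 2-identifying code in the square grid with (0,0) ∈ C, (-1,0) ∈ C, and (2,0) ∈ C. Then s_2(C;(0,0)) ≤ 65/12. -/
import Mathlib


open scoped Classical

noncomputable section

/-- The ball of radius `r` (in graph distance = l1 distance) around `c` in the square grid. -/
def sqBall (r : ℕ) (c : ℤ × ℤ) : Finset (ℤ × ℤ) :=
  (Finset.Icc (c.1 - r, c.2 - r) (c.1 + r, c.2 + r)).filter
    (fun x => (x.1 - c.1).natAbs + (x.2 - c.2).natAbs ≤ r)

/-- The identifying set `I_r(C;u) = B_r(u) ∩ C`. -/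
def iset (r : ℕ) (C : Set (ℤ × ℤ)) (u : ℤ × ℤ) : Finset (ℤ × ℤ) :=
  (sqBall r u).filter (fun x => x ∈ C)

/-- `C` is an `r`-identifying code in the square grid. -/
def IsIdCode (r : ℕ) (C : Set (ℤ × ℤ)) : Prop :=
  (∀ u, (iset r C u).Nonempty) ∧ ∀ u v : ℤ × ℤ, iset r C u = iset r C v → u = v

/-- The share `s_r(C;c)`. -/
def share (r : ℕ) (C : Set (ℤ × ℤ)) (c : ℤ × ℤ) : ℚ :=
  ∑ u ∈ sqBall r c, (1 : ℚ) / (iset r C u).card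

lemma mem_iset' {C : Set (ℤ×ℤ)} {x u : ℤ×ℤ} (hx : x ∈ C) (hb : x ∈ sqBall 2 u) :
    x ∈ iset 2 C u := Finset.mem_filter.2 ⟨hb, hx⟩

lemma block_sum (C : Set (ℤ×ℤ)) (hC : IsIdCode 2 C) (S T : Finset (ℤ×ℤ))
    (hm : 0 < S.card) (hTne : T.Nonempty) (hT : ∀ u ∈ T, S ⊆ iset 2 C u) :
    ∑ u ∈ T, (1:ℚ)/(iset 2 C u).card ≤ 1/(S.card:ℚ) + ((T.card:ℚ) - 1)/((S.card:ℚ)+1) := by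
  set m := S.card with hmdef
  have hmpos : (0:ℚ) < m := by exact_mod_cast hm
  have hub : ∀ u ∈ T, (iset 2 C u).card ≠ m → (1:ℚ)/(iset 2 C u).card ≤ 1/((m:ℚ)+1) := by
    intro u hu hne
    have h1 : m ≤ (iset 2 C u).card := Finset.card_le_card (hT u hu)
    have h2 : (m:ℚ)+1 ≤ (iset 2 C u).card := by exact_mod_cast (by omega : m+1 ≤ (iset 2 C u).card)
    exact one_div_le_one_div_of_le (by linarith) h2
  have hTc : (1:ℚ) ≤ T.card := by exact_mod_cast hTne.card_pos
  by_cases hex : ∃ u ∈ T, (iset 2 C u).card = m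
  · obtain ⟨u0, hu0T, hu0⟩ := hex
    have heq : iset 2 C u0 = S := ((Finset.eq_of_subset_of_card_le (hT u0 hu0T) hu0.le)).symm
    rw [← Finset.add_sum_erase T _ hu0T]
    have hbound : ∀ v ∈ T.erase u0, (1:ℚ)/(iset 2 C v).card ≤ 1/((m:ℚ)+1) := by
      intro v hv
      refine hub v (Finset.mem_of_mem_erase hv) (fun hv2 => ?_)
      have : iset 2 C v = S :=
        ((Finset.eq_of_subset_of_card_le (hT v (Finset.mem_of_mem_erase hv)) hv2.le)).symm
      exact (Finset.ne_of_mem_erase hv) (hC.2 v u0 (this.trans heq.symm))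
    have hsum := Finset.sum_le_card_nsmul _ _ _ hbound
    rw [Finset.card_erase_of_mem hu0T] at hsum
    have hcast : ((T.card - 1 : ℕ) : ℚ) = (T.card:ℚ) - 1 := by
      have : 1 ≤ T.card := hTne.card_pos
      push_cast [this]; ring
    rw [nsmul_eq_mul, hcast] at hsum
    have : (1:ℚ)/(iset 2 C u0).card = 1/(m:ℚ) := by rw [hu0]
    rw [this]
    have : ((T.card:ℚ) - 1) * (1/((m:ℚ)+1)) = ((T.card:ℚ) - 1)/((m:ℚ)+1) := by ring
    linarith [hsum, this]
  · push_neg at hex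
    have hsum := Finset.sum_le_card_nsmul T (fun u => (1:ℚ)/(iset 2 C u).card) (1/((m:ℚ)+1))
      (fun u hu => hub u hu (hex u hu))
    rw [nsmul_eq_mul] at hsum
    have h1m : (1:ℚ)/((m:ℚ)+1) ≤ 1/(m:ℚ) := one_div_le_one_div_of_le hmpos (by linarith)
    have hr : ((T.card:ℚ)) * (1/((m:ℚ)+1)) = ((T.card:ℚ)-1)/((m:ℚ)+1) + 1/((m:ℚ)+1) := by ring
    linarith

theorem share_le_65_12 (C : Set (ℤ × ℤ)) (hC : IsIdCode 2 C)
    (h0 : ((0 : ℤ), (0 : ℤ)) ∈ C) (h1 : ((-1 : ℤ), (0 : ℤ)) ∈ C)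
    (h2 : ((2 : ℤ), (0 : ℤ)) ∈ C) :
    share 2 C (0, 0) ≤ 65 / 12 := by
  have hS3 : ∀ u ∈ ({(0,0),(1,0)} : Finset (ℤ×ℤ)),
      ({((0:ℤ),(0:ℤ)), (-1,0), (2,0)} : Finset (ℤ×ℤ)) ⊆ iset 2 C u := by
    intro u hu
    fin_cases hu <;>
      simp only [Finset.insert_subset_iff, Finset.singleton_subset_iff] <;>
      exact ⟨mem_iset' h0 (by decide), mem_iset' h1 (by decide), mem_iset' h2 (by decide)⟩
  have hP01 : ∀ u ∈ ({(-2,0),(-1,-1),(-1,0),(-1,1),(0,-1),(0,1)} : Finset (ℤ×ℤ)),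
      ({((0:ℤ),(0:ℤ)), (-1,0)} : Finset (ℤ×ℤ)) ⊆ iset 2 C u := by
    intro u hu
    fin_cases hu <;>
      simp only [Finset.insert_subset_iff, Finset.singleton_subset_iff] <;>
      exact ⟨mem_iset' h0 (by decide), mem_iset' h1 (by decide)⟩
  have hP02 : ∀ u ∈ ({(1,-1),(1,1),(2,0)} : Finset (ℤ×ℤ)),
      ({((0:ℤ),(0:ℤ)), (2,0)} : Finset (ℤ×ℤ)) ⊆ iset 2 C u := by
    intro u hu
    fin_cases hu <;>
      simp only [Finset.insert_subset_iff, Finset.singleton_subset_iff] <;>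
      exact ⟨mem_iset' h0 (by decide), mem_iset' h2 (by decide)⟩
  have hP0 : ∀ u ∈ ({(0,-2),(0,2)} : Finset (ℤ×ℤ)),
      ({((0:ℤ),(0:ℤ))} : Finset (ℤ×ℤ)) ⊆ iset 2 C u := by
    intro u hu
    fin_cases hu <;>
      simp only [Finset.singleton_subset_iff] <;>
      exact mem_iset' h0 (by decide)
  have b1 := block_sum C hC _ _ (by decide) (by decide) hS3
  have b2 := block_sum C hC _ _ (by decide) (by decide) hP01
  have b3 := block_sum C hC _ _ (by decide) (by decide) hP02
  have b4 := block_sum C hC _ _ (by decide) (by decide) hP0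
  have hsplit : share 2 C (0,0) =
      (∑ u ∈ ({(0,0),(1,0)} : Finset (ℤ×ℤ)), (1:ℚ)/(iset 2 C u).card)
    + (∑ u ∈ ({(-2,0),(-1,-1),(-1,0),(-1,1),(0,-1),(0,1)} : Finset (ℤ×ℤ)), (1:ℚ)/(iset 2 C u).card)
    + (∑ u ∈ ({(1,-1),(1,1),(2,0)} : Finset (ℤ×ℤ)), (1:ℚ)/(iset 2 C u).card)
    + (∑ u ∈ ({(0,-2),(0,2)} : Finset (ℤ×ℤ)), (1:ℚ)/(iset 2 C u).card) := by
    rw [share, show sqBall 2 (0,0) =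
        (({(0,0),(1,0)} : Finset (ℤ×ℤ)) ∪ ({(-2,0),(-1,-1),(-1,0),(-1,1),(0,-1),(0,1)} : Finset (ℤ×ℤ))
          ∪ ({(1,-1),(1,1),(2,0)} : Finset (ℤ×ℤ)) ∪ ({(0,-2),(0,2)} : Finset (ℤ×ℤ))) from by decide,
      Finset.sum_union (by decide), Finset.sum_union (by decide), Finset.sum_union (by decide)]
  rw [hsplit]
  rw [show (({((0:ℤ),(0:ℤ)), (-1,0), (2,0)} : Finset (ℤ×ℤ)).card) = 3 from by decide,
      show (({((0:ℤ),(0:ℤ)), (1,0)} : Finset (ℤ×ℤ)).card) = 2 from by decide] at b1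
  rw [show (({((0:ℤ),(0:ℤ)), (-1,0)} : Finset (ℤ×ℤ)).card) = 2 from by decide,
      show (({((-2:ℤ),(0:ℤ)),(-1,-1),(-1,0),(-1,1),(0,-1),(0,1)} : Finset (ℤ×ℤ)).card) = 6 from by decide] at b2
  rw [show (({((0:ℤ),(0:ℤ)), (2,0)} : Finset (ℤ×ℤ)).card) = 2 from by decide,
      show (({((1:ℤ),(-1:ℤ)),(1,1),(2,0)} : Finset (ℤ×ℤ)).card) = 3 from by decide] at b3
  rw [show (({((0:ℤ),(0:ℤ))} : Finset (ℤ×ℤ)).card) = 1 from by decide,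
      show (({((0:ℤ),(-2:ℤ)),(0,2)} : Finset (ℤ×ℤ)).card) = 2 from by decide] at b4
  have exp1 : (∑ u ∈ ({(0,0),(1,0)} : Finset (ℤ×ℤ)), (1:ℚ)/(iset 2 C u).card)
      = 1/(iset 2 C (0,0)).card + 1/(iset 2 C (1,0)).card := by
    rw [Finset.sum_insert (by decide), Finset.sum_singleton]
  have exp2 : (∑ u ∈ ({(-2,0),(-1,-1),(-1,0),(-1,1),(0,-1),(0,1)} : Finset (ℤ×ℤ)), (1:ℚ)/(iset 2 C u).card)
      = 1/(iset 2 C (-2,0)).card + (1/(iset 2 C (-1,-1)).card + (1/(iset 2 C (-1,0)).card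
        + (1/(iset 2 C (-1,1)).card + (1/(iset 2 C (0,-1)).card + 1/(iset 2 C (0,1)).card)))) := by
    rw [Finset.sum_insert (by decide), Finset.sum_insert (by decide), Finset.sum_insert (by decide),
      Finset.sum_insert (by decide), Finset.sum_insert (by decide), Finset.sum_singleton]
  have exp3 : (∑ u ∈ ({(1,-1),(1,1),(2,0)} : Finset (ℤ×ℤ)), (1:ℚ)/(iset 2 C u).card)
      = 1/(iset 2 C (1,-1)).card + (1/(iset 2 C (1,1)).card + 1/(iset 2 C (2,0)).card) := by
    rw [Finset.sum_insert (by decide), Finset.sum_insert (by decide), Finset.sum_singleton]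
  have exp4 : (∑ u ∈ ({(0,-2),(0,2)} : Finset (ℤ×ℤ)), (1:ℚ)/(iset 2 C u).card)
      = 1/(iset 2 C (0,-2)).card + 1/(iset 2 C (0,2)).card := by
    rw [Finset.sum_insert (by decide), Finset.sum_singleton]
  rw [exp1] at b1; rw [exp2] at b2; rw [exp3] at b3; rw [exp4] at b4
  rw [exp1, exp2, exp3, exp4]
  push_cast at b1 b2 b3 b4
  linarith
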